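/- arXiv:1810.07820 — 5 statements merged into one kernel-verified Lean document; each statement's English description precedes it below -/
import Mathlib

section
/- If A = (α_{kj}) and B = (β_{kj}) are two infinite matrices with complex entries, each defining bounded operators on ℓ², then their Schur (entrywise) product A*B = (α_{kj}β_{kj}) also defines a bounded operator on ℓ², and ‖A*B‖ ≤ ‖A‖·‖B‖. -/
open Finset

noncomputable section

/-- A scalar infinite matrix defines a bounded operator on `ℓ²` with norm at most `C`,
expressed via uniform bounds of the bilinear form on finitely supported sequences. -/
def CBoundedBy (A : ℕ → ℕ → ℂ) (C : ℝ) : Prop :=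
  ∀ (F G : Finset ℕ) (x y : ℕ → ℂ),
    ‖∑ k ∈ G, ∑ j ∈ F, A k j * x j * (starRingEnd ℂ) (y k)‖ ≤
      C * Real.sqrt (∑ j ∈ F, ‖x j‖ ^ 2) * Real.sqrt (∑ k ∈ G, ‖y k‖ ^ 2)

/-- `A ∈ B(ℓ²)`. -/
def CMemB (A : ℕ → ℕ → ℂ) : Prop := ∃ C, 0 ≤ C ∧ CBoundedBy A C

/-- The operator norm of a matrix in `B(ℓ²)`. -/
def cOpNorm (A : ℕ → ℕ → ℂ) : ℝ := sInf {C | 0 ≤ C ∧ CBoundedBy A C}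

lemma col_bound {A : ℕ → ℕ → ℂ} {C : ℝ} (_hC : 0 ≤ C) (h : CBoundedBy A C) (j : ℕ)
    (G : Finset ℕ) : ∑ k ∈ G, ‖A k j‖ ^ 2 ≤ C ^ 2 := by
  have hb := h {j} G (fun _ => 1) (fun k => A k j)
  simp only [Finset.sum_singleton, mul_one, norm_one, one_pow, Real.sqrt_one] at hb
  set s : ℝ := ∑ k ∈ G, ‖A k j‖ ^ 2 with hs
  have hs0 : 0 ≤ s := Finset.sum_nonneg fun k _ => by positivity
  have hsum : ∑ k ∈ G, A k j * (starRingEnd ℂ) (A k j) = (s : ℂ) := by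
    rw [hs]
    push_cast
    refine Finset.sum_congr rfl fun k _ => ?_
    rw [Complex.mul_conj']
  rw [hsum] at hb
  have hb' : s ≤ C * Real.sqrt s := by
    simpa [Complex.norm_real, abs_of_nonneg hs0] using hb
  nlinarith [Real.sq_sqrt hs0, Real.sqrt_nonneg s, sq_nonneg (Real.sqrt s - C)]

lemma schur_bound {A B : ℕ → ℕ → ℂ} {Ca Cb : ℝ} (hCa : 0 ≤ Ca) (hCb : 0 ≤ Cb)
    (hA : CBoundedBy A Ca) (hB : CBoundedBy B Cb) :
    CBoundedBy (fun k j => A k j * B k j) (Ca * Cb) := by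
  intro F G x y
  set r : ℕ → ℝ := fun k => Real.sqrt (∑ j ∈ F, ‖A k j * x j‖ ^ 2) with hr
  -- row bound
  have hrow : ∀ k, ‖∑ j ∈ F, A k j * B k j * x j * (starRingEnd ℂ) (y k)‖ ≤
      Cb * r k * ‖y k‖ := by
    intro k
    have hb := hB F {k} (fun j => A k j * x j) y
    simp only [Finset.sum_singleton] at hb
    have h1 : √(‖y k‖ ^ 2) = ‖y k‖ := Real.sqrt_sq (norm_nonneg _)
    rw [h1] at hb
    calc ‖∑ j ∈ F, A k j * B k j * x j * (starRingEnd ℂ) (y k)‖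
        = ‖∑ j ∈ F, B k j * (A k j * x j) * (starRingEnd ℂ) (y k)‖ := by
          congr 1; refine Finset.sum_congr rfl fun j _ => by ring
      _ ≤ Cb * r k * ‖y k‖ := hb
  have step1 : ‖∑ k ∈ G, ∑ j ∈ F, A k j * B k j * x j * (starRingEnd ℂ) (y k)‖ ≤
      ∑ k ∈ G, Cb * r k * ‖y k‖ :=
    (norm_sum_le _ _).trans (Finset.sum_le_sum fun k _ => hrow k)
  -- Cauchy-Schwarz
  have hr0 : ∀ k, 0 ≤ r k := fun k => Real.sqrt_nonneg _
  have cs : ∑ k ∈ G, r k * ‖y k‖ ≤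
      Real.sqrt (∑ k ∈ G, r k ^ 2) * Real.sqrt (∑ k ∈ G, ‖y k‖ ^ 2) := by
    exact Real.sum_mul_le_sqrt_mul_sqrt G r (fun k => ‖y k‖)
  -- column estimate
  have hcol : ∑ k ∈ G, r k ^ 2 ≤ Ca ^ 2 * ∑ j ∈ F, ‖x j‖ ^ 2 := by
    have h1 : ∀ k, r k ^ 2 = ∑ j ∈ F, ‖A k j‖ ^ 2 * ‖x j‖ ^ 2 := by
      intro k
      rw [hr, Real.sq_sqrt (Finset.sum_nonneg fun j _ => by positivity)]
      exact Finset.sum_congr rfl fun j _ => by rw [norm_mul, mul_pow]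
    calc ∑ k ∈ G, r k ^ 2 = ∑ j ∈ F, (∑ k ∈ G, ‖A k j‖ ^ 2) * ‖x j‖ ^ 2 := by
          simp_rw [h1]; rw [Finset.sum_comm]; simp [Finset.sum_mul]
      _ ≤ ∑ j ∈ F, Ca ^ 2 * ‖x j‖ ^ 2 :=
          Finset.sum_le_sum fun j _ => by
            have := col_bound hCa hA j G
            nlinarith [sq_nonneg ‖x j‖]
      _ = Ca ^ 2 * ∑ j ∈ F, ‖x j‖ ^ 2 := by rw [Finset.mul_sum]
  have hsx : Real.sqrt (∑ k ∈ G, r k ^ 2) ≤ Ca * Real.sqrt (∑ j ∈ F, ‖x j‖ ^ 2) := by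
    calc Real.sqrt (∑ k ∈ G, r k ^ 2) ≤ Real.sqrt (Ca ^ 2 * ∑ j ∈ F, ‖x j‖ ^ 2) :=
          Real.sqrt_le_sqrt hcol
      _ = Ca * Real.sqrt (∑ j ∈ F, ‖x j‖ ^ 2) := by
          rw [Real.sqrt_mul (by positivity), Real.sqrt_sq hCa]
  calc ‖∑ k ∈ G, ∑ j ∈ F, A k j * B k j * x j * (starRingEnd ℂ) (y k)‖
      ≤ ∑ k ∈ G, Cb * r k * ‖y k‖ := step1
    _ = Cb * ∑ k ∈ G, r k * ‖y k‖ := by rw [Finset.mul_sum]; exact Finset.sum_congr rfl fun k _ => by ring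
    _ ≤ Cb * (Real.sqrt (∑ k ∈ G, r k ^ 2) * Real.sqrt (∑ k ∈ G, ‖y k‖ ^ 2)) :=
        mul_le_mul_of_nonneg_left cs hCb
    _ ≤ Cb * (Ca * Real.sqrt (∑ j ∈ F, ‖x j‖ ^ 2) * Real.sqrt (∑ k ∈ G, ‖y k‖ ^ 2)) := by
        have := mul_le_mul_of_nonneg_right hsx (Real.sqrt_nonneg (∑ k ∈ G, ‖y k‖ ^ 2))
        nlinarith [Real.sqrt_nonneg (∑ k ∈ G, ‖y k‖ ^ 2)]
    _ = Ca * Cb * Real.sqrt (∑ j ∈ F, ‖x j‖ ^ 2) * Real.sqrt (∑ k ∈ G, ‖y k‖ ^ 2) := by ring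

lemma opNorm_spec {A : ℕ → ℕ → ℂ} (hA : CMemB A) :
    0 ≤ cOpNorm A ∧ CBoundedBy A (cOpNorm A) := by
  obtain ⟨C0, hC0, hb0⟩ := hA
  have hne : {C | 0 ≤ C ∧ CBoundedBy A C}.Nonempty := ⟨C0, hC0, hb0⟩
  have hbdd : BddBelow {C | 0 ≤ C ∧ CBoundedBy A C} := ⟨0, fun C hC => hC.1⟩
  have h0 : 0 ≤ cOpNorm A := le_csInf hne fun C hC => hC.1
  refine ⟨h0, fun F G x y => ?_⟩
  set a := Real.sqrt (∑ j ∈ F, ‖x j‖ ^ 2) with ha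
  set b := Real.sqrt (∑ k ∈ G, ‖y k‖ ^ 2) with hb
  have ha0 : 0 ≤ a := Real.sqrt_nonneg _
  have hb0' : 0 ≤ b := Real.sqrt_nonneg _
  rcases eq_or_lt_of_le (mul_nonneg ha0 hb0') with hab | hab
  · -- a * b = 0 : one of the vectors vanishes on its support set
    have : (∑ k ∈ G, ∑ j ∈ F, A k j * x j * (starRingEnd ℂ) (y k)) = 0 := by
      rcases mul_eq_zero.mp hab.symm with h | h
      · have hx : ∀ j ∈ F, x j = 0 := by
          intro j hj
          have hs : ∑ j ∈ F, ‖x j‖ ^ 2 = 0 := by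
            by_contra hne'
            have : 0 < ∑ j ∈ F, ‖x j‖ ^ 2 :=
              lt_of_le_of_ne (Finset.sum_nonneg fun j _ => by positivity) (Ne.symm hne')
            rw [ha] at h
            exact absurd h (ne_of_gt (Real.sqrt_pos.mpr this))
          have := (Finset.sum_eq_zero_iff_of_nonneg
            (fun j _ => by positivity)).mp hs j hj
          simpa using this
        exact Finset.sum_eq_zero fun k _ => Finset.sum_eq_zero fun j hj => by
          rw [hx j hj]; ring
      · have hy : ∀ k ∈ G, y k = 0 := by
          intro k hk
          have hs : ∑ k ∈ G, ‖y k‖ ^ 2 = 0 := by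
            by_contra hne'
            have : 0 < ∑ k ∈ G, ‖y k‖ ^ 2 :=
              lt_of_le_of_ne (Finset.sum_nonneg fun k _ => by positivity) (Ne.symm hne')
            rw [hb] at h
            exact absurd h (ne_of_gt (Real.sqrt_pos.mpr this))
          have := (Finset.sum_eq_zero_iff_of_nonneg
            (fun k _ => by positivity)).mp hs k hk
          simpa using this
        exact Finset.sum_eq_zero fun k hk => Finset.sum_eq_zero fun j _ => by
          rw [hy k hk]; simp
    rw [this, norm_zero, mul_assoc]
    positivity
  · -- a * b > 0
    have key : ‖∑ k ∈ G, ∑ j ∈ F, A k j * x j * (starRingEnd ℂ) (y k)‖ / (a * b) ≤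
        cOpNorm A := by
      refine le_csInf hne fun C hC => ?_
      rw [div_le_iff₀ hab]
      calc ‖∑ k ∈ G, ∑ j ∈ F, A k j * x j * (starRingEnd ℂ) (y k)‖ ≤ C * a * b :=
            hC.2 F G x y
        _ = C * (a * b) := by ring
    rw [div_le_iff₀ hab] at key
    calc ‖∑ k ∈ G, ∑ j ∈ F, A k j * x j * (starRingEnd ℂ) (y k)‖ ≤
        cOpNorm A * (a * b) := key
      _ = cOpNorm A * a * b := by ring


/-- Schur's theorem: the entrywise (Schur) product of two matrices in `B(ℓ²)` is again
in `B(ℓ²)`, and `‖A*B‖ ≤ ‖A‖·‖B‖`. -/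
theorem schur_product_bounded (A B : ℕ → ℕ → ℂ) (hA : CMemB A) (hB : CMemB B) :
    CMemB (fun k j => A k j * B k j) ∧
      cOpNorm (fun k j => A k j * B k j) ≤ cOpNorm A * cOpNorm B := by
  obtain ⟨hA0, hAb⟩ := opNorm_spec hA
  obtain ⟨hB0, hBb⟩ := opNorm_spec hB
  have key := schur_bound hA0 hB0 hAb hBb
  have hmem : cOpNorm A * cOpNorm B ∈
      {C | 0 ≤ C ∧ CBoundedBy (fun k j => A k j * B k j) C} :=
    ⟨mul_nonneg hA0 hB0, key⟩
  refine ⟨⟨_, hmem⟩, csInf_le ⟨0, fun C hC => hC.1⟩ hmem⟩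
end
end

section
/- If A = (a_{kj}) is a scalar matrix that is a Schur multiplier of B(ℓ²) and T ∈ B(H), then the operator-valued matrix (a_{kj}T) is a two-sided Schur multiplier of B(ℓ²(H)) with ‖(a_{kj}T)‖_{M(ℓ²(H))} = ‖A‖_{M(ℓ²)}·‖T‖_{B(H)}. -/
open Finset Filter

noncomputable section

variable {H : Type*} [NormedAddCommGroup H] [InnerProductSpace ℂ H]
  [CompleteSpace H] [TopologicalSpace.SeparableSpace H]

/-- `A` defines a bounded operator on `ℓ²(H)` with norm at most `C`, expressed through
uniform bounds of the associated bilinear form on finitely supported sequences. -/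
def SchurBoundedBy (A : ℕ → ℕ → (H →L[ℂ] H)) (C : ℝ) : Prop :=
  ∀ (F G : Finset ℕ) (x y : ℕ → H),
    ‖∑ k ∈ G, ∑ j ∈ F, (inner ℂ (A k j (x j)) (y k) : ℂ)‖ ≤
      C * Real.sqrt (∑ j ∈ F, ‖x j‖ ^ 2) * Real.sqrt (∑ k ∈ G, ‖y k‖ ^ 2)

/-- `A ∈ B(ℓ²(H))`. -/
def MemB (A : ℕ → ℕ → (H →L[ℂ] H)) : Prop :=
  ∃ C, 0 ≤ C ∧ SchurBoundedBy A C

/-- The Schur product of two operator matrices: entrywise composition. -/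
def schur (A B : ℕ → ℕ → (H →L[ℂ] H)) : ℕ → ℕ → (H →L[ℂ] H) :=
  fun k j => (A k j).comp (B k j)

/-- `A` is a right Schur multiplier with multiplier norm at most `C`. -/
def MrBoundedBy (A : ℕ → ℕ → (H →L[ℂ] H)) (C : ℝ) : Prop :=
  ∀ (B : ℕ → ℕ → (H →L[ℂ] H)) (D : ℝ), 0 ≤ D → SchurBoundedBy B D →
    SchurBoundedBy (schur B A) (C * D)

/-- `A` is a left Schur multiplier with multiplier norm at most `C`. -/
def MlBoundedBy (A : ℕ → ℕ → (H →L[ℂ] H)) (C : ℝ) : Prop :=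
  ∀ (B : ℕ → ℕ → (H →L[ℂ] H)) (D : ℝ), 0 ≤ D → SchurBoundedBy B D →
    SchurBoundedBy (schur A B) (C * D)

/-- `A ∈ M_r(ℓ²(H))`. -/
def MemMr (A : ℕ → ℕ → (H →L[ℂ] H)) : Prop :=
  ∃ C, 0 ≤ C ∧ MrBoundedBy A C

/-- `A ∈ M_l(ℓ²(H))`. -/
def MemMl (A : ℕ → ℕ → (H →L[ℂ] H)) : Prop :=
  ∃ C, 0 ≤ C ∧ MlBoundedBy A C

/-- A matrix polynomial: supported on finitely many diagonals, with uniformly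
bounded operator entries. -/
def IsMatPoly (A : ℕ → ℕ → (H →L[ℂ] H)) : Prop :=
  (∃ N : ℕ, ∀ k j : ℕ, N < ((j : ℤ) - (k : ℤ)).natAbs → A k j = 0) ∧
    ∃ M : ℝ, ∀ k j : ℕ, ‖A k j‖ ≤ M

/-- `A ∈ L¹_r(ℓ²(H))`: `A` is a right Schur multiplier lying in the closure of the
matrix polynomials in the right multiplier norm. -/
def MemL1r (A : ℕ → ℕ → (H →L[ℂ] H)) : Prop :=
  MemMr A ∧ ∀ ε : ℝ, 0 < ε → ∃ P : ℕ → ℕ → (H →L[ℂ] H),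
    IsMatPoly P ∧ MrBoundedBy (fun k j => A k j - P k j) ε

/-- `A ∈ L¹_l(ℓ²(H))`: `A` is a left Schur multiplier lying in the closure of the
matrix polynomials in the left multiplier norm. -/
def MemL1l (A : ℕ → ℕ → (H →L[ℂ] H)) : Prop :=
  MemMl A ∧ ∀ ε : ℝ, 0 < ε → ∃ P : ℕ → ℕ → (H →L[ℂ] H),
    IsMatPoly P ∧ MlBoundedBy (fun k j => A k j - P k j) ε

/-- A scalar matrix is a Schur multiplier of `B(ℓ²)` with multiplier norm at most `C`. -/
def CMulBoundedBy (A : ℕ → ℕ → ℂ) (C : ℝ) : Prop :=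
  ∀ (B : ℕ → ℕ → ℂ) (D : ℝ), 0 ≤ D → CBoundedBy B D →
    CBoundedBy (fun k j => A k j * B k j) (C * D)

/-!
A scalar multiplier acts on an operator matrix `B` through its compressions
`⟪ŷ_k, B_{kj} x̂_j⟫` to unit vectors `x̂_j`, `ŷ_k`, which form a scalar matrix bounded on `ℓ²` by
`‖B‖`. Since `(a_{kj}T) ∘ B = A ∘ (T B_{kj})` and `B ∘ (a_{kj}T) = A ∘ (B_{kj} T)`, and composing
with `T` costs at most `‖T‖`, the matrix `(a_{kj}T)` is a two-sided multiplier of norm at most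
`‖A‖ ‖T‖`.

Conversely, testing the left multiplier `(a_{kj}T)` on `(b_{kj} P_e)`, for a scalar matrix `b` and
the projection `P_e` onto a unit vector `e`, against the vectors `(u_j e)` and `(v_k T e)`, gives
`‖T e‖ ‖A ∘ b‖ ≤ C ‖b‖`; the supremum over `e` turns this into `‖A‖ ≤ C / ‖T‖`.
-/

open scoped InnerProductSpace Pointwise
open InnerProductSpace (rankOne)

lemma sqrt_sum_sq_norm_le_mul {E F : Type*} [SeminormedAddCommGroup E]
    [SeminormedAddCommGroup F] {s : Finset ℕ} {x : ℕ → E} {u : ℕ → F} {c : ℝ} (hc : 0 ≤ c)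
    (h : ∀ j ∈ s, ‖x j‖ ≤ c * ‖u j‖) :
    √(∑ j ∈ s, ‖x j‖ ^ 2) ≤ c * √(∑ j ∈ s, ‖u j‖ ^ 2) := by
  rw [← Real.sqrt_sq hc, ← Real.sqrt_mul (sq_nonneg c), Finset.mul_sum]
  gcongr with j hj
  rw [← mul_pow]
  exact pow_le_pow_left₀ (norm_nonneg _) (h j hj) 2

lemma sqrt_sum_sq_norm_smul {𝕜 E : Type*} [NormedField 𝕜] [SeminormedAddCommGroup E]
    [NormedSpace 𝕜 E] (s : Finset ℕ) (c : ℕ → 𝕜) (w : E) :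
    √(∑ j ∈ s, ‖c j • w‖ ^ 2) = √(∑ j ∈ s, ‖c j‖ ^ 2) * ‖w‖ := by
  simp_rw [norm_smul, mul_pow, ← Finset.sum_mul]
  rw [Real.sqrt_mul (Finset.sum_nonneg fun j _ => sq_nonneg _), Real.sqrt_sq (norm_nonneg w)]

lemma norm_sum_sum_inner_comm {E : Type*} [SeminormedAddCommGroup E] [InnerProductSpace ℂ E]
    (F G : Finset ℕ) (a b : ℕ → ℕ → E) :
    ‖∑ k ∈ G, ∑ j ∈ F, ⟪a k j, b k j⟫_ℂ‖ = ‖∑ k ∈ G, ∑ j ∈ F, ⟪b k j, a k j⟫_ℂ‖ := by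
  rw [← RCLike.norm_conj]
  simp only [map_sum, inner_conj_symm]

lemma norm_inv_norm_smul_le_one {E : Type*} [NormedAddCommGroup E] [NormedSpace ℂ E] (z : E) :
    ‖(‖z‖ : ℂ)⁻¹ • z‖ ≤ 1 := by
  rw [norm_smul, norm_inv, Complex.norm_real, norm_norm]
  exact inv_mul_le_one_of_le₀ le_rfl (norm_nonneg z)

lemma ContinuousLinearMap.opNorm_mul_le_of_unit_norm {E F : Type*} [NormedAddCommGroup E]
    [NormedSpace ℂ E] [SeminormedAddCommGroup F] [NormedSpace ℂ F] (T : E →L[ℂ] F) {L K : ℝ}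
    (hL : 0 ≤ L) (hK : 0 ≤ K) (h : ∀ e, ‖e‖ = 1 → ‖T e‖ * L ≤ K) : ‖T‖ * L ≤ K := by
  have hLT := ContinuousLinearMap.opNorm_le_of_unit_norm (f := (L : ℂ) • T) hK fun e he => by
    simpa only [smul_apply, norm_smul, Complex.norm_real, Real.norm_of_nonneg hL, mul_comm]
      using h e he
  simpa only [norm_smul, Complex.norm_real, Real.norm_of_nonneg hL, mul_comm] using hLT

section OperatorMatrix

variable {E : Type*} [NormedAddCommGroup E] [InnerProductSpace ℂ E]
  {B : ℕ → ℕ → E →L[ℂ] E} {D : ℝ}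

lemma SchurBoundedBy.comp_right (hB : SchurBoundedBy B D) (hD : 0 ≤ D) (T : E →L[ℂ] E) :
    SchurBoundedBy (fun k j => (B k j).comp T) (‖T‖ * D) := by
  intro F G x y
  calc ‖∑ k ∈ G, ∑ j ∈ F, ⟪B k j (T (x j)), y k⟫_ℂ‖
      ≤ D * √(∑ j ∈ F, ‖T (x j)‖ ^ 2) * √(∑ k ∈ G, ‖y k‖ ^ 2) := hB F G _ y
    _ ≤ D * (‖T‖ * √(∑ j ∈ F, ‖x j‖ ^ 2)) * √(∑ k ∈ G, ‖y k‖ ^ 2) := by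
      gcongr
      exact sqrt_sum_sq_norm_le_mul (norm_nonneg T) fun j _ => T.le_opNorm (x j)
    _ = ‖T‖ * D * √(∑ j ∈ F, ‖x j‖ ^ 2) * √(∑ k ∈ G, ‖y k‖ ^ 2) := by ring

lemma SchurBoundedBy.comp_left [CompleteSpace E] (hB : SchurBoundedBy B D) (hD : 0 ≤ D)
    (T : E →L[ℂ] E) : SchurBoundedBy (fun k j => T.comp (B k j)) (‖T‖ * D) := by
  intro F G x y
  calc ‖∑ k ∈ G, ∑ j ∈ F, ⟪T (B k j (x j)), y k⟫_ℂ‖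
      = ‖∑ k ∈ G, ∑ j ∈ F, ⟪B k j (x j), T.adjoint (y k)⟫_ℂ‖ := by
        simp only [ContinuousLinearMap.adjoint_inner_right]
    _ ≤ D * √(∑ j ∈ F, ‖x j‖ ^ 2) * √(∑ k ∈ G, ‖T.adjoint (y k)‖ ^ 2) := hB F G x _
    _ ≤ D * √(∑ j ∈ F, ‖x j‖ ^ 2) * (‖T‖ * √(∑ k ∈ G, ‖y k‖ ^ 2)) := by
      gcongr
      refine sqrt_sum_sq_norm_le_mul (norm_nonneg T) fun k _ => ?_
      simpa only [ContinuousLinearMap.adjoint.norm_map] using T.adjoint.le_opNorm (y k)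
    _ = ‖T‖ * D * √(∑ j ∈ F, ‖x j‖ ^ 2) * √(∑ k ∈ G, ‖y k‖ ^ 2) := by ring

lemma SchurBoundedBy.cBoundedBy_inner (hB : SchurBoundedBy B D) (hD : 0 ≤ D) {x y : ℕ → E}
    (hx : ∀ j, ‖x j‖ ≤ 1) (hy : ∀ k, ‖y k‖ ≤ 1) :
    CBoundedBy (fun k j => ⟪y k, B k j (x j)⟫_ℂ) D := by
  intro F G u v
  have hterm : ∀ k j, ⟪y k, B k j (x j)⟫_ℂ * u j * starRingEnd ℂ (v k)
      = ⟪v k • y k, B k j (u j • x j)⟫_ℂ := by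
    intro k j
    simp only [map_smul, inner_smul_left, inner_smul_right]
    ring
  simp only [hterm]
  rw [norm_sum_sum_inner_comm]
  calc _ ≤ D * √(∑ j ∈ F, ‖u j • x j‖ ^ 2) * √(∑ k ∈ G, ‖v k • y k‖ ^ 2) :=
        hB F G (fun j => u j • x j) (fun k => v k • y k)
    _ ≤ D * √(∑ j ∈ F, ‖u j‖ ^ 2) * √(∑ k ∈ G, ‖v k‖ ^ 2) := by
        gcongr with j _ k _
        · exact (norm_smul_le _ _).trans (mul_le_of_le_one_right (norm_nonneg _) (hx j))
        · exact (norm_smul_le _ _).trans (mul_le_of_le_one_right (norm_nonneg _) (hy k))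

lemma inner_apply_eq_normalized (S : E →L[ℂ] E) (x y : E) :
    ⟪y, S x⟫_ℂ = ⟪(‖y‖ : ℂ)⁻¹ • y, S ((‖x‖ : ℂ)⁻¹ • x)⟫_ℂ * ‖x‖ * starRingEnd ℂ ‖y‖ := by
  rcases eq_or_ne x 0 with rfl | hx
  · simp
  rcases eq_or_ne y 0 with rfl | hy
  · simp
  have hx' : (‖x‖ : ℂ) ≠ 0 := by simpa using hx
  have hy' : (‖y‖ : ℂ) ≠ 0 := by simpa using hy
  simp only [map_smul, inner_smul_left, inner_smul_right, map_inv₀, Complex.conj_ofReal]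
  field_simp

lemma CMulBoundedBy.schurBoundedBy_smul {A : ℕ → ℕ → ℂ} {C : ℝ} (hA : CMulBoundedBy A C)
    (hB : SchurBoundedBy B D) (hD : 0 ≤ D) :
    SchurBoundedBy (fun k j => A k j • B k j) (C * D) := by
  intro F G x y
  have hcomp := hB.cBoundedBy_inner hD (fun j => norm_inv_norm_smul_le_one (x j))
    (fun k => norm_inv_norm_smul_le_one (y k))
  calc ‖∑ k ∈ G, ∑ j ∈ F, ⟪(A k j • B k j) (x j), y k⟫_ℂ‖
      = ‖∑ k ∈ G, ∑ j ∈ F, A k j * ⟪(‖y k‖ : ℂ)⁻¹ • y k, B k j ((‖x j‖ : ℂ)⁻¹ • x j)⟫_ℂ *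
          (‖x j‖ : ℂ) * starRingEnd ℂ (‖y k‖ : ℂ)‖ := by
        rw [norm_sum_sum_inner_comm]
        congr 1
        refine Finset.sum_congr rfl fun k _ => Finset.sum_congr rfl fun j _ => ?_
        rw [smul_apply, inner_smul_right, inner_apply_eq_normalized]
        ring
    _ ≤ C * D * √(∑ j ∈ F, ‖(‖x j‖ : ℂ)‖ ^ 2) * √(∑ k ∈ G, ‖(‖y k‖ : ℂ)‖ ^ 2) :=
        hA _ D hD hcomp F G _ _
    _ = C * D * √(∑ j ∈ F, ‖x j‖ ^ 2) * √(∑ k ∈ G, ‖y k‖ ^ 2) := by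
        simp only [Complex.norm_real, norm_norm]

lemma CMulBoundedBy.mlBoundedBy_smul [CompleteSpace E] {A : ℕ → ℕ → ℂ} {C : ℝ}
    (hA : CMulBoundedBy A C) (T : E →L[ℂ] E) : MlBoundedBy (fun k j => A k j • T) (C * ‖T‖) := by
  intro B D hD hB
  have h := hA.schurBoundedBy_smul (hB.comp_left hD T) (by positivity)
  unfold schur
  simpa only [ContinuousLinearMap.smul_comp, mul_assoc] using h

lemma CMulBoundedBy.mrBoundedBy_smul {A : ℕ → ℕ → ℂ} {C : ℝ}
    (hA : CMulBoundedBy A C) (T : E →L[ℂ] E) : MrBoundedBy (fun k j => A k j • T) (C * ‖T‖) := by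
  intro B D hD hB
  have h := hA.schurBoundedBy_smul (hB.comp_right hD T) (by positivity)
  unfold schur
  simpa only [ContinuousLinearMap.comp_smul, mul_assoc] using h

lemma norm_sum_sum_inner_smul_rankOne (c : ℕ → ℕ → ℂ) (f e : E) (F G : Finset ℕ)
    (x y : ℕ → E) :
    ‖∑ k ∈ G, ∑ j ∈ F, ⟪(c k j • rankOne ℂ f e) (x j), y k⟫_ℂ‖ =
      ‖∑ k ∈ G, ∑ j ∈ F, c k j * ⟪e, x j⟫_ℂ * starRingEnd ℂ ⟪f, y k⟫_ℂ‖ := by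
  rw [norm_sum_sum_inner_comm]
  congr 1
  refine Finset.sum_congr rfl fun k _ => Finset.sum_congr rfl fun j _ => ?_
  rw [smul_apply, InnerProductSpace.rankOne_apply, inner_smul_right, inner_smul_right,
    inner_conj_symm]
  ring

lemma CBoundedBy.schurBoundedBy_smul_rankOne {b : ℕ → ℕ → ℂ} (hb : CBoundedBy b D) (hD : 0 ≤ D)
    {e : E} (he : ‖e‖ ≤ 1) : SchurBoundedBy (fun k j => b k j • rankOne ℂ e e) D := by
  intro F G x y
  rw [norm_sum_sum_inner_smul_rankOne]
  calc _ ≤ D * √(∑ j ∈ F, ‖⟪e, x j⟫_ℂ‖ ^ 2) * √(∑ k ∈ G, ‖⟪e, y k⟫_ℂ‖ ^ 2) := hb F G _ _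
    _ ≤ D * √(∑ j ∈ F, ‖x j‖ ^ 2) * √(∑ k ∈ G, ‖y k‖ ^ 2) := by
      gcongr with j _ k _
      · exact (norm_inner_le_norm e (x j)).trans (mul_le_of_le_one_left (norm_nonneg _) he)
      · exact (norm_inner_le_norm e (y k)).trans (mul_le_of_le_one_left (norm_nonneg _) he)

lemma MlBoundedBy.norm_apply_mul_le {A : ℕ → ℕ → ℂ} {C : ℝ} {T : E →L[ℂ] E}
    (h : MlBoundedBy (fun k j => A k j • T) C) (hC : 0 ≤ C) {b : ℕ → ℕ → ℂ}
    (hb : CBoundedBy b D) (hD : 0 ≤ D) {e : E} (he : ‖e‖ = 1) (F G : Finset ℕ) (u v : ℕ → ℂ) :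
    ‖T e‖ * ‖∑ k ∈ G, ∑ j ∈ F, A k j * b k j * u j * starRingEnd ℂ (v k)‖ ≤
      C * D * √(∑ j ∈ F, ‖u j‖ ^ 2) * √(∑ k ∈ G, ‖v k‖ ^ 2) := by
  have hschur : schur (fun k j => A k j • T) (fun k j => b k j • rankOne ℂ e e) =
      fun k j => (A k j * b k j) • rankOne ℂ (T e) e := by
    ext k j : 2
    simp only [schur, ContinuousLinearMap.comp_smul, InnerProductSpace.comp_rankOne, smul_apply,
      map_smul, smul_smul, mul_comm]
  have h1 := h _ D hD (hb.schurBoundedBy_smul_rankOne hD he.le) F G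
    (fun j => u j • e) (fun k => v k • T e)
  have hsum : ∑ k ∈ G, ∑ j ∈ F, A k j * b k j * ⟪e, u j • e⟫_ℂ * starRingEnd ℂ ⟪T e, v k • T e⟫_ℂ =
      (∑ k ∈ G, ∑ j ∈ F, A k j * b k j * u j * starRingEnd ℂ (v k)) * (‖T e‖ ^ 2 : ℝ) := by
    simp_rw [Finset.sum_mul]
    refine Finset.sum_congr rfl fun k _ => Finset.sum_congr rfl fun j _ => ?_
    simp only [inner_smul_right, inner_self_eq_norm_sq_to_K, he, map_mul,
      map_pow, RCLike.ofReal_eq_complex_ofReal, Complex.conj_ofReal]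
    push_cast
    ring
  rw [hschur, norm_sum_sum_inner_smul_rankOne, hsum, sqrt_sum_sq_norm_smul, sqrt_sum_sq_norm_smul,
    he, norm_mul, Complex.norm_real, norm_pow, norm_norm] at h1
  rcases (norm_nonneg (T e)).eq_or_lt with hTe | hTe
  · rw [← hTe, zero_mul]
    positivity
  refine le_of_mul_le_mul_right ?_ hTe
  calc _ = _ * ‖T e‖ ^ 2 := by ring
    _ ≤ _ := h1
    _ = _ := by ring

lemma MlBoundedBy.cMulBoundedBy_div_norm {A : ℕ → ℕ → ℂ} {C : ℝ} {T : E →L[ℂ] E}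
    (h : MlBoundedBy (fun k j => A k j • T) C) (hC : 0 ≤ C) (hT : T ≠ 0) :
    CMulBoundedBy A (C / ‖T‖) := by
  intro b D hD hb F G u v
  have hTL := T.opNorm_mul_le_of_unit_norm (norm_nonneg _) (by positivity)
    fun e he => h.norm_apply_mul_le hC hb hD he F G u v
  rw [div_mul_eq_mul_div, div_mul_eq_mul_div, div_mul_eq_mul_div,
    le_div_iff₀' (norm_pos_iff.2 hT)]
  exact hTL

end OperatorMatrix

/-- If `A = (a_{kj})` is a scalar Schur multiplier of `B(ℓ²)` and `T ∈ B(H)`, then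
`(a_{kj}T)` is a two-sided Schur multiplier of `B(ℓ²(H))` with
`‖(a_{kj}T)‖_{M(ℓ²(H))} = ‖A‖_{M(ℓ²)}·‖T‖`. -/
theorem scalar_tensor_multiplier (A : ℕ → ℕ → ℂ) (T : H →L[ℂ] H)
    (hA : ∃ C, 0 ≤ C ∧ CMulBoundedBy A C) :
    (∃ C, 0 ≤ C ∧ MlBoundedBy (fun k j => A k j • T) C ∧
        MrBoundedBy (fun k j => A k j • T) C) ∧
      sInf {C | 0 ≤ C ∧ MlBoundedBy (fun k j => A k j • T) C ∧
          MrBoundedBy (fun k j => A k j • T) C} =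
        sInf {C | 0 ≤ C ∧ CMulBoundedBy A C} * ‖T‖ := by
  obtain ⟨C₀, hC₀, hA₀⟩ := hA
  have hmem : ∀ c ∈ {C | 0 ≤ C ∧ CMulBoundedBy A C},
      c * ‖T‖ ∈ {C | 0 ≤ C ∧ MlBoundedBy (fun k j => A k j • T) C ∧
        MrBoundedBy (fun k j => A k j • T) C} :=
    fun c ⟨hc, hAc⟩ => ⟨by positivity, hAc.mlBoundedBy_smul T, hAc.mrBoundedBy_smul T⟩
  refine ⟨⟨_, hmem C₀ ⟨hC₀, hA₀⟩⟩, ?_⟩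
  rcases eq_or_ne T 0 with rfl | hT
  · have h0 := hmem C₀ ⟨hC₀, hA₀⟩
    rw [norm_zero, mul_zero] at h0 ⊢
    exact le_antisymm (csInf_le ⟨0, fun c hc => hc.1⟩ h0) (Real.sInf_nonneg fun c hc => hc.1)
  have hset : {C | 0 ≤ C ∧ MlBoundedBy (fun k j => A k j • T) C ∧
      MrBoundedBy (fun k j => A k j • T) C} = ‖T‖ • {C | 0 ≤ C ∧ CMulBoundedBy A C} := by
    ext c
    refine ⟨fun ⟨hc, hMl, _⟩ => ⟨c / ‖T‖, ⟨by positivity, hMl.cMulBoundedBy_div_norm hc hT⟩,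
      mul_div_cancel₀ c (norm_ne_zero_iff.2 hT)⟩, ?_⟩
    rintro ⟨c, hc, rfl⟩
    simpa only [smul_eq_mul, mul_comm] using hmem c hc
  rw [hset, Real.sInf_smul_of_nonneg (norm_nonneg T), smul_eq_mul, mul_comm]
end
end

section
/- (Riemann–Lebesgue lemma for matrix multipliers) If A = ∑_{l∈ℤ} D_l belongs to L¹_r(ℓ²(H)), then ‖D_l‖_{B(ℓ²(H))} → 0 as |l| → ∞, where D_l is the l-th diagonal of A. -/
/-!
Testing a right Schur multiplier `M` against the matrix unit with entry `id` at `(k, j)` isolates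
the entry `M k j`, so the right multiplier norm dominates the norm of every entry. Given `ε`, the
entries of `A` on a diagonal beyond the support of an `ε`-close matrix polynomial `P` are entries
of `A - P`, hence of norm at most `ε`.
-/

open Finset Filter

noncomputable section

variable {H : Type*} [NormedAddCommGroup H] [InnerProductSpace ℂ H]
  [CompleteSpace H] [TopologicalSpace.SeparableSpace H]

lemma norm_le_sqrt_sum_norm_sq {ι E : Type*} [SeminormedAddCommGroup E] {s : Finset ι}
    {i : ι} (hi : i ∈ s) (x : ι → E) : ‖x i‖ ≤ √(∑ j ∈ s, ‖x j‖ ^ 2) :=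
  Real.le_sqrt_of_sq_le <| Finset.single_le_sum (f := fun j => ‖x j‖ ^ 2)
    (fun _ _ => sq_nonneg _) hi

section

omit [CompleteSpace H] [TopologicalSpace.SeparableSpace H]

lemma SchurBoundedBy.mono {A : ℕ → ℕ → (H →L[ℂ] H)} {C C' : ℝ} (hA : SchurBoundedBy A C)
    (hCC' : C ≤ C') : SchurBoundedBy A C' := fun F G x y =>
  (hA F G x y).trans <| by gcongr

lemma schurBoundedBy_single (k₀ j₀ : ℕ) (T : H →L[ℂ] H) :
    SchurBoundedBy (Pi.single k₀ (Pi.single j₀ T)) ‖T‖ := by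
  intro F G x y
  have hsum : ∑ k ∈ G, ∑ j ∈ F,
      inner ℂ ((Pi.single k₀ (Pi.single j₀ T) : ℕ → ℕ → (H →L[ℂ] H)) k j (x j)) (y k) =
      if k₀ ∈ G ∧ j₀ ∈ F then inner ℂ (T (x j₀)) (y k₀) else 0 := by
    simp [Pi.single_apply, apply_ite DFunLike.coe, ite_apply, apply_ite (inner ℂ), ite_and]
  rw [hsum]
  split_ifs with h
  · calc ‖inner ℂ (T (x j₀)) (y k₀)‖ ≤ ‖T‖ * ‖x j₀‖ * ‖y k₀‖ := by
          grw [norm_inner_le_norm, T.le_opNorm]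
      _ ≤ _ := by grw [norm_le_sqrt_sum_norm_sq h.2 x, norm_le_sqrt_sum_norm_sq h.1 y]
  · rw [norm_zero]
    positivity

lemma SchurBoundedBy.norm_apply_le {A : ℕ → ℕ → (H →L[ℂ] H)} {C : ℝ}
    (hA : SchurBoundedBy A C) (hC : 0 ≤ C) (k j : ℕ) : ‖A k j‖ ≤ C := by
  refine (A k j).opNorm_le_bound hC fun v => ?_
  have hw : ‖A k j v‖ ^ 2 ≤ C * ‖v‖ * ‖A k j v‖ := by
    simpa [inner_self_eq_norm_sq_to_K] using hA {j} {k} (fun _ => v) (fun _ => A k j v)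
  rcases (norm_nonneg (A k j v)).eq_or_lt with hw0 | hw0
  · rw [← hw0]
    positivity
  · nlinarith

lemma MrBoundedBy.norm_apply_le {A : ℕ → ℕ → (H →L[ℂ] H)} {C : ℝ}
    (hA : MrBoundedBy A C) (hC : 0 ≤ C) (k j : ℕ) : ‖A k j‖ ≤ C := by
  have hE : SchurBoundedBy (Pi.single k (Pi.single j (ContinuousLinearMap.id ℂ H))) 1 :=
    (schurBoundedBy_single k j _).mono ContinuousLinearMap.norm_id_le
  simpa [schur] using (hA _ 1 zero_le_one hE).norm_apply_le (mul_nonneg hC zero_le_one) k j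

end

/-- Riemann–Lebesgue lemma for matrix multipliers: if `A ∈ L¹_r(ℓ²(H))`, then the
operator norms of its diagonals `D_l` (which equal `sup_k ‖T_{k,k+l}‖`) tend to `0`
as `|l| → ∞`. -/
theorem riemann_lebesgue_diagonals (A : ℕ → ℕ → (H →L[ℂ] H)) (hA : MemL1r A) :
    ∀ ε : ℝ, 0 < ε → ∃ N : ℕ, ∀ k j : ℕ,
      N < ((j : ℤ) - (k : ℤ)).natAbs → ‖A k j‖ ≤ ε := by
  intro ε hε
  obtain ⟨P, ⟨⟨N, hP⟩, -⟩, hAP⟩ := hA.2 ε hε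
  refine ⟨N, fun k j hkj => ?_⟩
  simpa [hP k j hkj] using hAP.norm_apply_le hε.le k j
end
end

section
/- If A ∈ L¹_r(ℓ²(H)) and B ∈ B(ℓ²(H)), then B*A belongs to C(ℓ²(H)), i.e. the Fejér means σ_n(B*A) converge to B*A in the operator norm of B(ℓ²(H)). -/
open Finset Filter

noncomputable section

variable {H : Type*} [NormedAddCommGroup H] [InnerProductSpace ℂ H]
  [CompleteSpace H] [TopologicalSpace.SeparableSpace H]

/-- The Fejér mean `σ_n(A)`. -/
def fejerMean (n : ℕ) (A : ℕ → ℕ → (H →L[ℂ] H)) : ℕ → ℕ → (H →L[ℂ] H) :=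
  fun k j => (max 0 (1 - ((((j : ℤ) - (k : ℤ)).natAbs : ℝ) / (n + 1)))) • A k j

/-!
Fix a matrix polynomial `P`, close to `A` in the right multiplier norm, and split
`B ∗ A = B ∗ (A - P) + B ∗ P`.

The Fejér means are Schur contractions: `n + 1 - |j - k|` is the number of windows
`{i - n, …, i}` containing both `j` and `k`, so `(n + 1) σ_n(X)` is the sum over `i` of the
compressions of `X` to these windows, and Cauchy–Schwarz over `i` gives `‖σ_n(X)‖ ≤ ‖X‖`. Hence
`σ_n(B ∗ (A - P)) - B ∗ (A - P)` has norm at most `2 ‖A - P‖_{M_r} ‖B‖`, uniformly in `n`.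
On the other hand `σ_n(B ∗ P) - B ∗ P` is supported on the `2N + 1` diagonals of `P` with
entries of size `O(N / n)`, so it tends to `0`.
-/

open Topology

lemma Finset.sum_comp_le_mul_sum {ι κ : Type*} [DecidableEq κ] {s : Finset ι} {t : Finset κ}
    (π : ι → κ) (hπ : ∀ a ∈ s, π a ∈ t) {c : ℕ} (hc : ∀ b ∈ t, #{a ∈ s | π a = b} ≤ c)
    {g : κ → ℝ} (hg : ∀ b, 0 ≤ g b) :
    ∑ a ∈ s, g (π a) ≤ c * ∑ b ∈ t, g b := by
  rw [sum_comp, mul_sum]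
  calc ∑ b ∈ s.image π, #{a ∈ s | π a = b} • g b ≤ ∑ b ∈ s.image π, c * g b := by
        refine sum_le_sum fun b hb => ?_
        rw [nsmul_eq_mul]
        gcongr
        · exact hg b
        · exact hc b (image_subset_iff.2 hπ hb)
    _ ≤ ∑ b ∈ t, c * g b :=
        sum_le_sum_of_subset_of_nonneg (image_subset_iff.2 hπ) fun b _ _ => by
          have := hg b; positivity

lemma sum_sum_window {M : Type*} [AddCommMonoid M] {n L : ℕ} {F : Finset ℕ}
    (hF : ∀ j ∈ F, j + n < L) (f : ℕ → M) :
    ∑ i ∈ range L, ∑ j ∈ F ∩ Icc (i - n) i, f j = (n + 1) • ∑ j ∈ F, f j := by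
  rw [sum_comm' (t' := F) (s' := fun j => Icc j (j + n)), smul_sum]
  · refine sum_congr rfl fun j _ => ?_
    rw [sum_const, Nat.card_Icc, add_assoc, add_tsub_cancel_left]
  · intro i j
    simp only [mem_range, mem_inter, mem_Icc]
    exact ⟨fun ⟨_, hj, _⟩ => ⟨by omega, hj⟩,
      fun ⟨_, hj⟩ => ⟨by have := hF j hj; omega, hj, by omega⟩⟩

lemma sum_sum_sum_window {M : Type*} [AddCommMonoid M] {n L : ℕ} {F G : Finset ℕ}
    (hG : ∀ k ∈ G, k + n < L) (f : ℕ → ℕ → M) :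
    ∑ i ∈ range L, ∑ k ∈ G ∩ Icc (i - n) i, ∑ j ∈ F ∩ Icc (i - n) i, f k j =
      ∑ k ∈ G, ∑ j ∈ F, (n + 1 - ((j : ℤ) - k).natAbs) • f k j := by
  rw [sum_comm' (t' := G) (s' := fun k => Icc k (k + n))]
  · refine sum_congr rfl fun k _ => ?_
    rw [sum_comm' (t' := F) (s' := fun j => Icc (max k j) (min k j + n))]
    · refine sum_congr rfl fun j _ => ?_
      rw [sum_const, Nat.card_Icc]
      congr 1
      omega
    · intro i j
      simp only [mem_inter, mem_Icc]
      exact ⟨fun ⟨_, hj, _⟩ => ⟨by omega, hj⟩, fun ⟨_, hj⟩ => ⟨by omega, hj, by omega⟩⟩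
  · intro i k
    simp only [mem_range, mem_inter, mem_Icc]
    exact ⟨fun ⟨_, hk, _⟩ => ⟨by omega, hk⟩,
      fun ⟨_, hk⟩ => ⟨by have := hG k hk; omega, hk, by omega⟩⟩

def fejerWeight (n d : ℕ) : ℝ := max 0 (1 - (d : ℝ) / (n + 1))

lemma add_one_mul_fejerWeight (n d : ℕ) :
    ((n : ℝ) + 1) * fejerWeight n d = ((n + 1 - d : ℕ) : ℝ) := by
  rcases le_total d (n + 1) with h | h
  · rw [fejerWeight, max_eq_right, Nat.cast_sub h]
    · field_simp; push_cast; ring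
    · rw [sub_nonneg, div_le_one (by positivity)]; exact_mod_cast h
  · rw [fejerWeight, max_eq_left, Nat.sub_eq_zero_of_le h]
    · simp
    · rw [sub_nonpos, one_le_div (by positivity)]; exact_mod_cast h

lemma abs_fejerWeight_sub_one_le (n d : ℕ) : |fejerWeight n d - 1| ≤ d / (n + 1) := by
  have : 0 ≤ (d : ℝ) / (n + 1) := by positivity
  rw [fejerWeight, abs_le]
  constructor <;> cases max_cases 0 (1 - (d : ℝ) / (n + 1)) <;> linarith

section

variable {E : Type*} [NormedAddCommGroup E] [InnerProductSpace ℂ E]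

namespace SchurBoundedBy

variable {X Y : ℕ → ℕ → (E →L[ℂ] E)} {C D : ℝ}

lemma mono_s12 (hX : SchurBoundedBy X C) (h : C ≤ D) : SchurBoundedBy X D := fun F G x y =>
  (hX F G x y).trans (by gcongr)

lemma add (hX : SchurBoundedBy X C) (hY : SchurBoundedBy Y D) :
    SchurBoundedBy (X + Y) (C + D) := by
  intro F G x y
  simp only [Pi.add_apply, add_apply, inner_add_left, sum_add_distrib]
  calc _ ≤ _ := norm_add_le _ _
    _ ≤ _ := add_le_add (hX F G x y) (hY F G x y)
    _ = _ := by ring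

lemma neg (hX : SchurBoundedBy X C) : SchurBoundedBy (-X) C := by
  intro F G x y
  simpa only [Pi.neg_apply, neg_apply, inner_neg_left, sum_neg_distrib,
    norm_neg] using hX F G x y

lemma sub (hX : SchurBoundedBy X C) (hY : SchurBoundedBy Y D) :
    SchurBoundedBy (X - Y) (C + D) := by
  simpa only [sub_eq_add_neg] using hX.add hY.neg

lemma norm_apply_le_s12 (hX : SchurBoundedBy X C) (hC : 0 ≤ C) (k j : ℕ) : ‖X k j‖ ≤ C := by
  refine ContinuousLinearMap.opNorm_le_bound _ hC fun v => ?_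
  have h := hX {j} {k} (fun _ => v) (fun _ => X k j v)
  simp only [sum_singleton, Real.sqrt_sq (norm_nonneg _)] at h
  rw [← inner_self_re_eq_norm, inner_self_eq_norm_mul_norm] at h
  rcases (norm_nonneg (X k j v)).eq_or_lt with h0 | h0
  · rw [← h0]; positivity
  · exact le_of_mul_le_mul_right h h0

lemma of_banded {N : ℕ} {δ : ℝ} (hδ : 0 ≤ δ)
    (hband : ∀ k j : ℕ, N < ((j : ℤ) - k).natAbs → X k j = 0) (hX : ∀ k j, ‖X k j‖ ≤ δ) :
    SchurBoundedBy X ((2 * N + 1) * δ) := by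
  intro F G x y
  set S := {p ∈ G ×ˢ F | ((p.2 : ℤ) - p.1).natAbs ≤ N}
  have hS : ∀ p ∈ S, p.1 ∈ G ∧ p.2 ∈ F := fun p hp => mem_product.1 (mem_filter.1 hp).1
  have hx : ∑ p ∈ S, ‖x p.2‖ ^ 2 ≤ ((2 * N + 1 : ℕ) : ℝ) * ∑ j ∈ F, ‖x j‖ ^ 2 := by
    refine sum_comp_le_mul_sum (g := fun j => ‖x j‖ ^ 2) Prod.snd (fun p hp => (hS p hp).2)
      (fun j _ => ?_) fun _ => sq_nonneg _
    calc #{p ∈ S | p.2 = j} ≤ #(Icc (j - N) (j + N) ×ˢ {j}) := by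
          refine card_le_card fun p hp => ?_
          simp only [S, mem_filter, mem_product, mem_Icc, mem_singleton] at hp ⊢
          omega
      _ ≤ 2 * N + 1 := by rw [card_product, Nat.card_Icc, card_singleton]; omega
  have hy : ∑ p ∈ S, ‖y p.1‖ ^ 2 ≤ ((2 * N + 1 : ℕ) : ℝ) * ∑ k ∈ G, ‖y k‖ ^ 2 := by
    refine sum_comp_le_mul_sum (g := fun k => ‖y k‖ ^ 2) Prod.fst (fun p hp => (hS p hp).1)
      (fun k _ => ?_) fun _ => sq_nonneg _
    calc #{p ∈ S | p.1 = k} ≤ #({k} ×ˢ Icc (k - N) (k + N)) := by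
          refine card_le_card fun p hp => ?_
          simp only [S, mem_filter, mem_product, mem_Icc, mem_singleton] at hp ⊢
          omega
      _ ≤ 2 * N + 1 := by rw [card_product, Nat.card_Icc, card_singleton]; omega
  have hterm : ∀ p : ℕ × ℕ,
      ‖(inner ℂ (X p.1 p.2 (x p.2)) (y p.1) : ℂ)‖ ≤ δ * (‖x p.2‖ * ‖y p.1‖) := fun p =>
    calc _ ≤ ‖X p.1 p.2 (x p.2)‖ * ‖y p.1‖ := norm_inner_le_norm _ _
      _ ≤ ‖X p.1 p.2‖ * ‖x p.2‖ * ‖y p.1‖ := by gcongr; exact (X _ _).le_opNorm _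
      _ ≤ δ * (‖x p.2‖ * ‖y p.1‖) := by rw [mul_assoc]; gcongr; exact hX _ _
  have hsupp : ∀ p ∈ G ×ˢ F, (inner ℂ (X p.1 p.2 (x p.2)) (y p.1) : ℂ) ≠ 0 →
      ((p.2 : ℤ) - p.1).natAbs ≤ N := fun p _ hp => by
    contrapose! hp
    simp [hband p.1 p.2 hp]
  have hcast : (((2 * N + 1 : ℕ) : ℝ)) = 2 * N + 1 := by push_cast; ring
  calc ‖∑ k ∈ G, ∑ j ∈ F, (inner ℂ (X k j (x j)) (y k) : ℂ)‖
      = ‖∑ p ∈ S, (inner ℂ (X p.1 p.2 (x p.2)) (y p.1) : ℂ)‖ := by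
        rw [sum_filter_of_ne hsupp, sum_product]
    _ ≤ δ * ∑ p ∈ S, ‖x p.2‖ * ‖y p.1‖ := by
        rw [mul_sum]; exact norm_sum_le_of_le _ fun p _ => hterm p
    _ ≤ δ * (√(∑ p ∈ S, ‖x p.2‖ ^ 2) * √(∑ p ∈ S, ‖y p.1‖ ^ 2)) := by
        gcongr; exact Real.sum_mul_le_sqrt_mul_sqrt _ _ _
    _ ≤ δ * (√(((2 * N + 1 : ℕ) : ℝ) * ∑ j ∈ F, ‖x j‖ ^ 2) *
          √(((2 * N + 1 : ℕ) : ℝ) * ∑ k ∈ G, ‖y k‖ ^ 2)) := by gcongr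
    _ = (2 * N + 1) * δ * √(∑ j ∈ F, ‖x j‖ ^ 2) * √(∑ k ∈ G, ‖y k‖ ^ 2) := by
        rw [Real.sqrt_mul (by positivity), Real.sqrt_mul (by positivity), ← hcast]
        ring_nf
        rw [Real.sq_sqrt (by positivity)]
        ring

end SchurBoundedBy

variable {X Y : ℕ → ℕ → (E →L[ℂ] E)} {D : ℝ}

lemma fejerMean_apply (n k j : ℕ) :
    fejerMean n X k j = fejerWeight n ((j : ℤ) - k).natAbs • X k j := rfl

lemma fejerMean_add (n : ℕ) : fejerMean n (X + Y) = fejerMean n X + fejerMean n Y := by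
  ext k j : 2
  simp only [fejerMean_apply, Pi.add_apply, smul_add]

lemma schur_add (B : ℕ → ℕ → (E →L[ℂ] E)) : schur B (X + Y) = schur B X + schur B Y := by
  ext k j : 2
  simp only [schur, Pi.add_apply, ContinuousLinearMap.comp_add]

lemma schurBoundedBy_fejerMean_sub_self_of_banded {N : ℕ} {K : ℝ} (hK : 0 ≤ K)
    (hband : ∀ k j : ℕ, N < ((j : ℤ) - k).natAbs → X k j = 0) (hX : ∀ k j, ‖X k j‖ ≤ K)
    (n : ℕ) : SchurBoundedBy (fejerMean n X - X) ((2 * N + 1) * (N / (n + 1) * K)) := by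
  refine .of_banded (by positivity) (fun k j h => ?_) fun k j => ?_
  · simp only [Pi.sub_apply, fejerMean_apply, hband k j h, smul_zero, sub_zero]
  · by_cases h : N < ((j : ℤ) - k).natAbs
    · simp only [Pi.sub_apply, fejerMean_apply, hband k j h, smul_zero, sub_zero, norm_zero]
      positivity
    have hentry : (fejerMean n X - X) k j = (fejerWeight n ((j : ℤ) - k).natAbs - 1) • X k j := by
      rw [sub_smul, one_smul]; rfl
    rw [hentry, norm_smul, Real.norm_eq_abs]
    refine mul_le_mul ((abs_fejerWeight_sub_one_le n _).trans ?_) (hX k j) (norm_nonneg _)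
      (by positivity)
    gcongr
    exact_mod_cast not_lt.1 h

lemma add_one_mul_sum_inner_fejerMean (n L : ℕ) {F G : Finset ℕ} (hG : ∀ k ∈ G, k + n < L)
    (x y : ℕ → E) :
    ((n : ℂ) + 1) * ∑ k ∈ G, ∑ j ∈ F, (inner ℂ (fejerMean n X k j (x j)) (y k) : ℂ) =
      ∑ i ∈ range L, ∑ k ∈ G ∩ Icc (i - n) i, ∑ j ∈ F ∩ Icc (i - n) i,
        (inner ℂ (X k j (x j)) (y k) : ℂ) := by
  rw [sum_sum_sum_window hG, mul_sum]
  refine sum_congr rfl fun k _ => ?_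
  rw [mul_sum]
  refine sum_congr rfl fun j _ => ?_
  rw [fejerMean_apply, smul_apply, ← Complex.coe_smul, inner_smul_left,
    Complex.conj_ofReal, nsmul_eq_mul, ← mul_assoc]
  congr 1
  exact_mod_cast add_one_mul_fejerWeight n _

theorem SchurBoundedBy.fejerMean (hX : SchurBoundedBy X D) (hD : 0 ≤ D) (n : ℕ) :
    SchurBoundedBy (_root_.fejerMean n X) D := by
  intro F G x y
  set L := (F ∪ G).sup id + n + 1
  have hL : ∀ j ∈ F ∪ G, j + n < L := fun j hj => by
    have : j ≤ (F ∪ G).sup id := le_sup (f := id) hj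
    omega
  set a : ℕ → ℝ := fun i => ∑ j ∈ F ∩ Icc (i - n) i, ‖x j‖ ^ 2
  set b : ℕ → ℝ := fun i => ∑ k ∈ G ∩ Icc (i - n) i, ‖y k‖ ^ 2
  have ha : ∑ i ∈ range L, a i = (n + 1) * ∑ j ∈ F, ‖x j‖ ^ 2 := by
    rw [sum_sum_window fun j hj => hL j (mem_union_left _ hj), nsmul_eq_mul]; push_cast; ring
  have hb : ∑ i ∈ range L, b i = (n + 1) * ∑ k ∈ G, ‖y k‖ ^ 2 := by
    rw [sum_sum_window fun k hk => hL k (mem_union_right _ hk), nsmul_eq_mul]; push_cast; ring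
  have key : ((n : ℝ) + 1) *
        ‖∑ k ∈ G, ∑ j ∈ F, (inner ℂ (_root_.fejerMean n X k j (x j)) (y k) : ℂ)‖ ≤ ((n : ℝ) + 1) * (D * √(∑ j ∈ F, ‖x j‖ ^ 2) * √(∑ k ∈ G, ‖y k‖ ^ 2)) :=
    calc _ = ‖∑ i ∈ range L, ∑ k ∈ G ∩ Icc (i - n) i, ∑ j ∈ F ∩ Icc (i - n) i,
          (inner ℂ (X k j (x j)) (y k) : ℂ)‖ := by
          rw [← add_one_mul_sum_inner_fejerMean n L fun k hk => hL k (mem_union_right _ hk),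
            norm_mul]
          norm_cast
      _ ≤ ∑ i ∈ range L, D * (√(a i) * √(b i)) :=
          norm_sum_le_of_le _ fun i _ => (hX _ _ x y).trans_eq (mul_assoc _ _ _)
      _ ≤ D * (√(∑ i ∈ range L, a i) * √(∑ i ∈ range L, b i)) := by
          rw [← mul_sum]
          gcongr
          exact Real.sum_sqrt_mul_sqrt_le _ (fun _ => by positivity) fun _ => by positivity
      _ = _ := by
          rw [ha, hb, Real.sqrt_mul (by positivity), Real.sqrt_mul (by positivity)]
          ring_nf
          rw [Real.sq_sqrt (by positivity)]
          ring
  exact le_of_mul_le_mul_left key (by positivity)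

lemma SchurBoundedBy.fejerMean_sub_self (hX : SchurBoundedBy X D) (hD : 0 ≤ D) (n : ℕ) :
    SchurBoundedBy (_root_.fejerMean n X - X) (2 * D) :=
  ((hX.fejerMean hD n).sub hX).mono_s12 (two_mul D).ge

lemma IsMatPoly.schur_left (hX : IsMatPoly X) {B : ℕ → ℕ → (E →L[ℂ] E)} (hB : MemB B) :
    IsMatPoly (schur B X) := by
  obtain ⟨⟨N, hband⟩, M, hM⟩ := hX
  obtain ⟨C, hC, hBC⟩ := hB
  refine ⟨⟨N, fun k j h => by simp [schur, hband k j h]⟩, C * M, fun k j => ?_⟩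
  exact (ContinuousLinearMap.opNorm_comp_le _ _).trans
    (mul_le_mul (hBC.norm_apply_le_s12 hC k j) (hM k j) (norm_nonneg _) hC)

lemma IsMatPoly.eventually_fejerMean_sub_self (hX : IsMatPoly X) {ε : ℝ} (hε : 0 < ε) :
    ∀ᶠ n in atTop, SchurBoundedBy (fejerMean n X - X) ε := by
  obtain ⟨⟨N, hband⟩, M, hM⟩ := hX
  have hM0 : 0 ≤ M := (norm_nonneg _).trans (hM 0 0)
  have hlim : Tendsto (fun n : ℕ => (2 * N + 1) * (N / ((n : ℝ) + 1) * M)) atTop (𝓝 0) := by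
    have h := tendsto_one_div_add_atTop_nhds_zero_nat.const_mul ((2 * N + 1) * N * M)
    rw [mul_zero] at h
    convert h using 2 with n
    ring
  filter_upwards [hlim.eventually (ge_mem_nhds hε)] with n hn
  exact (schurBoundedBy_fejerMean_sub_self_of_banded hM0 hband hM n).mono_s12 hn

end

/-- If `A ∈ L¹_r(ℓ²(H))` and `B ∈ B(ℓ²(H))` then `B*A ∈ C(ℓ²(H))`, i.e. the Fejér means
of `B*A` converge to `B*A` in the operator norm of `B(ℓ²(H))`. -/
theorem schur_memL1r_memC (A B : ℕ → ℕ → (H →L[ℂ] H))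
    (hA : MemL1r A) (hB : MemB B) :
    ∀ ε : ℝ, 0 < ε → ∃ N : ℕ, ∀ n : ℕ, N ≤ n →
      SchurBoundedBy (fun k j => fejerMean n (schur B A) k j - schur B A k j) ε := by
  intro ε hε
  obtain ⟨Cb, hCb, hBCb⟩ := hB
  set η := ε / (4 * (Cb + 1))
  obtain ⟨P, hP, hAP⟩ := hA.2 η (by positivity)
  have hfar (n : ℕ) :
      SchurBoundedBy (fejerMean n (schur B (A - P)) - schur B (A - P)) (ε / 2) := by
    refine ((hAP B Cb hCb hBCb).fejerMean_sub_self (by positivity) n).mono_s12 ?_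
    calc 2 * (η * Cb) ≤ 2 * (η * (Cb + 1)) := by gcongr; linarith
      _ = ε / 2 := by simp only [η]; field_simp; ring
  obtain ⟨N₀, hnear⟩ := eventually_atTop.1 <|
    (hP.schur_left ⟨Cb, hCb, hBCb⟩).eventually_fejerMean_sub_self (half_pos hε)
  refine ⟨N₀, fun n hn => ?_⟩
  have hsplit : fejerMean n (schur B A) - schur B A =
      (fejerMean n (schur B (A - P)) - schur B (A - P)) +
        (fejerMean n (schur B P) - schur B P) := by
    rw [sub_add_sub_comm, ← fejerMean_add, ← schur_add, sub_add_cancel]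
  show SchurBoundedBy (fejerMean n (schur B A) - schur B A) ε
  simpa only [← hsplit, add_halves] using (hfar n).add (hnear n hn)
end
end

section
/- Let P(t) = ∑_{l} T_l e^{ilt} be a B(H)-valued trigonometric polynomial (T_l ∈ B(H), finitely many nonzero) and let A_P be the Toeplitz matrix (T_{j−k}). Then sup_{‖x‖=1} (1/2π)∫₀^{2π} ‖∑_l T_l(x)e^{ilt}‖ dt ≤ ‖A_P‖_{M_r(ℓ²(H))}. -/
open Finset Filter

noncomputable section

variable {H : Type*} [NormedAddCommGroup H] [InnerProductSpace ℂ H]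
  [CompleteSpace H] [TopologicalSpace.SeparableSpace H]

/-!
Fix a unit vector `x` and put `f t = ∑ₗ e^{ilt} Tₗ x`. For `δ > 0` take a continuous `u` with
`‖u‖ ≤ 1` and `Re ⟪f, u⟫ ≥ ‖f‖ - δ`, with Fourier coefficients `wₘ`. The rank-one Toeplitz matrix
`B = (⟪w_{j-k}, ·⟫ x)` has norm at most `1` on `ℓ²(H)`: its bilinear form on `(p, q)` is
`(2π)⁻¹ ∫ ⟪P, u⟫ ⟪x, Q⟫` for the trigonometric polynomials `P`, `Q` with coefficients `p`, `q`, so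
Cauchy–Schwarz and Parseval apply. Hence the Schur product `B ∘ A_P`, the Toeplitz matrix of
`aₘ = ⟪Tₘ x, wₘ⟫`, has norm at most `C`; testing it on `x` repeated `n` times gives
`n ‖∑ aₘ‖ ≤ C n + O(1)`. Finally `∑ aₘ = (2π)⁻¹ ∫ ⟪f, u⟫`, whose real part is at least
`(2π)⁻¹ ∫ ‖f‖ - δ`.
-/

open Real intervalIntegral
open scoped InnerProductSpace

theorem card_filter_range_not_add_mem_le (n : ℕ) (m : ℤ) :
    #((range n).filter fun k : ℕ => ¬(0 ≤ (k : ℤ) + m ∧ (k : ℤ) + m < n)) ≤ m.natAbs := by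
  rcases le_or_gt 0 m with hm | hm
  · calc _ ≤ #(Ico (n - m.toNat) n) := card_le_card fun k hk => by
          simp only [mem_filter, mem_range] at hk
          exact mem_Ico.2 (by omega)
      _ ≤ m.natAbs := by rw [Nat.card_Ico]; omega
  · calc _ ≤ #(range m.natAbs) := card_le_card fun k hk => by
          simp only [mem_filter, mem_range] at hk
          exact mem_range.2 (by omega)
      _ = m.natAbs := card_range _

section ToeplitzSums

variable {F : Type*} [NormedAddCommGroup F]

theorem sum_range_apply_sub_eq_sum_ite {a : ℤ → F} {S : Finset ℤ}
    (ha : Function.support a ⊆ S) (n k : ℕ) :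
    ∑ j ∈ range n, a (j - k) =
      ∑ m ∈ S, if 0 ≤ (k : ℤ) + m ∧ (k : ℤ) + m < n then a m else 0 := by
  rw [← sum_filter]
  refine sum_bij_ne_zero (fun j _ _ => (j : ℤ) - k) (fun j hj hne => ?_)
    (fun j _ _ j' _ _ h => by omega) (fun m hm hne => ?_) (fun _ _ _ => rfl)
  · simp only [mem_filter, mem_range] at hj ⊢
    exact ⟨ha hne, by omega, by omega⟩
  · simp only [mem_filter] at hm
    refine ⟨((k : ℤ) + m).toNat, mem_range.2 (by omega), ?_, by omega⟩
    rwa [show ((((k : ℤ) + m).toNat : ℕ) : ℤ) - k = m by omega]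

theorem norm_nsmul_sum_sub_sum_range_sum_range_le {a : ℤ → F} {S : Finset ℤ}
    (ha : Function.support a ⊆ S) (n : ℕ) :
    ‖n • ∑ m ∈ S, a m - ∑ k ∈ range n, ∑ j ∈ range n, a (j - k)‖ ≤
      ∑ m ∈ S, m.natAbs * ‖a m‖ := by
  rw [show n • ∑ m ∈ S, a m = ∑ _k ∈ range n, ∑ m ∈ S, a m by rw [sum_const, card_range],
    ← sum_sub_distrib]
  simp_rw [sum_range_apply_sub_eq_sum_ite ha, ← sum_sub_distrib, sub_ite, sub_self, sub_zero]
  rw [sum_comm]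
  refine (norm_sum_le _ _).trans (sum_le_sum fun m _ => ?_)
  rw [sum_ite, sum_const_zero, zero_add, sum_const]
  refine norm_nsmul_le.trans ?_
  gcongr
  exact_mod_cast card_filter_range_not_add_mem_le n m

theorem norm_sum_le_of_norm_sum_range_sum_range_le [NormedSpace ℝ F] {a : ℤ → F} {S : Finset ℤ}
    (ha : Function.support a ⊆ S) {C : ℝ}
    (h : ∀ n : ℕ, ‖∑ k ∈ range n, ∑ j ∈ range n, a (j - k)‖ ≤ C * n) :
    ‖∑ m ∈ S, a m‖ ≤ C := by
  set K := ∑ m ∈ S, m.natAbs * ‖a m‖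
  refine le_of_forall_pos_le_add fun ε hε => ?_
  obtain ⟨n, hn⟩ := exists_nat_gt (K / ε)
  have hn0 : (0 : ℝ) < n := lt_of_le_of_lt (by positivity) hn
  have hK : K < ε * n := by rwa [div_lt_iff₀ hε, mul_comm] at hn
  have hbound : n * ‖∑ m ∈ S, a m‖ ≤ C * n + K :=
    calc n * ‖∑ m ∈ S, a m‖ = ‖n • ∑ m ∈ S, a m‖ := by rw [RCLike.norm_nsmul ℝ, nsmul_eq_mul]
      _ ≤ ‖∑ k ∈ range n, ∑ j ∈ range n, a (j - k)‖ +
          ‖n • ∑ m ∈ S, a m - ∑ k ∈ range n, ∑ j ∈ range n, a (j - k)‖ := norm_le_insert' _ _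
      _ ≤ C * n + K := add_le_add (h n) (norm_nsmul_sum_sub_sum_range_sum_range_le ha n)
  nlinarith

end ToeplitzSums

theorem integral_exp_intCast_mul_mul_I (m : ℤ) :
    ∫ t in (-π)..π, Complex.exp (m * t * Complex.I) = if m = 0 then (2 * π : ℂ) else 0 := by
  split_ifs with hm
  · simp [hm, two_mul]
  · have hc : (m : ℂ) * Complex.I ≠ 0 := by simp [hm]
    have hper : Complex.exp (m * Complex.I * π) = Complex.exp (m * Complex.I * (-π : ℝ)) :=
      Complex.exp_eq_exp_iff_exists_int.2 ⟨m, by push_cast; ring⟩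
    simp_rw [mul_right_comm _ _ Complex.I]
    rw [integral_exp_mul_complex hc, hper, sub_self, zero_div]

theorem integral_mul_le_sqrt_integral_sq_mul_sqrt {a b : ℝ} (hab : a ≤ b) {f g : ℝ → ℝ}
    (hf : Continuous f) (hg : Continuous g) (hf0 : 0 ≤ f) (hg0 : 0 ≤ g) :
    ∫ t in a..b, f t * g t ≤ √(∫ t in a..b, f t ^ 2) * √(∫ t in a..b, g t ^ 2) := by
  have hL2 : ∀ h : ℝ → ℝ, Continuous h →
      MeasureTheory.MemLp h (ENNReal.ofReal 2) (MeasureTheory.volume.restrict (Set.Ioc a b)) :=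
    fun h hh => by
      rw [ENNReal.ofReal_ofNat, MeasureTheory.memLp_two_iff_integrable_sq hh.aestronglyMeasurable]
      exact ((hh.pow 2).integrableOn_Icc).mono_set Set.Ioc_subset_Icc_self
  simp only [integral_of_le hab, sqrt_eq_rpow, ← rpow_natCast]
  simpa using MeasureTheory.integral_mul_le_Lp_mul_Lq_of_nonneg Real.HolderConjugate.two_two
    (.of_forall hf0) (.of_forall hg0) (hL2 f hf) (hL2 g hg)

section InnerProduct

variable {E : Type*} [NormedAddCommGroup E] [InnerProductSpace ℂ E]

theorem integral_inner_sum_exp_smul {ι : Type*} (s : Finset ι) {n : ι → ℤ}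
    (hn : Function.Injective n) (p q : ι → E) :
    ∫ t in (-π)..π, ⟪∑ i ∈ s, Complex.exp (n i * t * Complex.I) • p i,
        ∑ i ∈ s, Complex.exp (n i * t * Complex.I) • q i⟫_ℂ = 2 * π * ∑ i ∈ s, ⟪p i, q i⟫_ℂ := by
  have hexpand : ∀ t : ℝ, ⟪∑ i ∈ s, Complex.exp (n i * t * Complex.I) • p i,
      ∑ i ∈ s, Complex.exp (n i * t * Complex.I) • q i⟫_ℂ =
      ∑ i ∈ s, ∑ j ∈ s, Complex.exp ((n j - n i : ℤ) * t * Complex.I) * ⟪p i, q j⟫_ℂ := by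
    intro t
    rw [sum_inner]
    refine sum_congr rfl fun i _ => ?_
    rw [inner_sum]
    refine sum_congr rfl fun j _ => ?_
    rw [inner_smul_left, inner_smul_right, ← mul_assoc, ← Complex.exp_conj, ← Complex.exp_add]
    congr 2
    simp only [map_mul, Complex.conj_I, Complex.conj_ofReal, map_intCast]
    push_cast
    ring
  have hcont : ∀ i j, Continuous
      (fun t : ℝ => Complex.exp ((n j - n i : ℤ) * t * Complex.I) * ⟪p i, q j⟫_ℂ) := by
    intro i j; fun_prop
  simp_rw [hexpand]
  rw [integral_finsetSum fun i _ =>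
    (continuous_finsetSum _ fun j _ => hcont i j).intervalIntegrable _ _, mul_sum]
  refine sum_congr rfl fun i hi => ?_
  rw [integral_finsetSum fun j _ => (hcont i j).intervalIntegrable _ _]
  simp_rw [integral_mul_const, integral_exp_intCast_mul_mul_I, ite_mul, zero_mul]
  rw [sum_eq_single_of_mem i hi fun j _ hji => if_neg (sub_ne_zero.2 (hn.ne hji)),
    if_pos (sub_self _)]

theorem integral_norm_sum_exp_smul_sq {ι : Type*} (s : Finset ι) {n : ι → ℤ}
    (hn : Function.Injective n) (p : ι → E) :
    ∫ t in (-π)..π, ‖∑ i ∈ s, Complex.exp (n i * t * Complex.I) • p i‖ ^ 2 =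
      2 * π * ∑ i ∈ s, ‖p i‖ ^ 2 := by
  have h := congrArg RCLike.re (integral_inner_sum_exp_smul s hn p p)
  simpa [inner_self_eq_norm_sq_to_K, ← Complex.ofReal_pow, intervalIntegral.integral_ofReal] using h


theorem exists_continuous_norm_le_one_re_inner_ge {X : Type*} [TopologicalSpace X] {f : X → E}
    (hf : Continuous f) {δ : ℝ} (hδ : 0 < δ) :
    ∃ u : X → E, Continuous u ∧ (∀ x, ‖u x‖ ≤ 1) ∧ ∀ x, ‖f x‖ - δ ≤ (⟪f x, u x⟫_ℂ).re := by
  set r : X → ℝ := fun x => max ‖f x‖ δ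
  have hr : ∀ x, 0 < r x := fun x => hδ.trans_le (le_max_right _ _)
  refine ⟨fun x => (((r x)⁻¹ : ℝ) : ℂ) • f x, ?_, fun x => ?_, fun x => ?_⟩
  · exact (Complex.continuous_ofReal.comp
      ((hf.norm.max continuous_const).inv₀ fun x => (hr x).ne')).smul hf
  · rw [norm_smul, Complex.norm_real, norm_inv, Real.norm_of_nonneg (hr x).le,
      inv_mul_le_one₀ (hr x)]
    exact le_max_left _ _
  · rw [inner_smul_right, Complex.re_ofReal_mul, ← RCLike.re_to_complex, inner_self_eq_norm_sq,
      inv_mul_eq_div, le_div_iff₀ (hr x)]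
    rcases le_total ‖f x‖ δ with h | h
    · rw [show r x = δ from max_eq_right h]; nlinarith [norm_nonneg (f x)]
    · rw [show r x = ‖f x‖ from max_eq_left h]; nlinarith

theorem integral_norm_le_re_integral_inner_add {a b : ℝ} (hab : a ≤ b) {f u : ℝ → E}
    (hf : Continuous f) (hu : Continuous u) {δ : ℝ} (h : ∀ t, ‖f t‖ - δ ≤ (⟪f t, u t⟫_ℂ).re) :
    ∫ t in a..b, ‖f t‖ ≤ (∫ t in a..b, ⟪f t, u t⟫_ℂ).re + (b - a) * δ := by
  have hmono : ∫ t in a..b, (‖f t‖ - δ) ≤ ∫ t in a..b, (⟪f t, u t⟫_ℂ).re :=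
    integral_mono_on hab ((hf.norm.sub continuous_const).intervalIntegrable a b)
      ((Complex.continuous_re.comp (hf.inner hu)).intervalIntegrable a b) fun t _ => h t
  rw [integral_sub (hf.norm.intervalIntegrable a b) intervalIntegrable_const, integral_const,
    smul_eq_mul] at hmono
  have hre : ∫ t in a..b, (⟪f t, u t⟫_ℂ).re = (∫ t in a..b, ⟪f t, u t⟫_ℂ).re :=
    Complex.reCLM.intervalIntegral_comp_comm ((hf.inner hu).intervalIntegrable a b)
  linarith

def rankOneToeplitz (u : ℝ → E) (x : E) : ℕ → ℕ → E →L[ℂ] E :=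
  fun k j => (innerSL ℂ (fourierCoeffOn (neg_lt_self pi_pos) u ((j : ℤ) - k))).smulRight x

theorem inner_rankOneToeplitz_apply (u : ℝ → E) (x : E) (k j : ℕ) (y z : E) :
    ⟪rankOneToeplitz u x k j y, z⟫_ℂ =
      ⟪y, fourierCoeffOn (neg_lt_self pi_pos) u ((j : ℤ) - k)⟫_ℂ * ⟪x, z⟫_ℂ := by
  rw [rankOneToeplitz, ContinuousLinearMap.smulRight_apply, innerSL_apply_apply, inner_smul_left,
    inner_conj_symm]

variable [CompleteSpace E]

theorem inner_fourierCoeffOn_neg_pi_pi {u : ℝ → E} (hu : Continuous u) (v : E) (m : ℤ) :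
    ⟪v, fourierCoeffOn (neg_lt_self pi_pos) u m⟫_ℂ =
      (2 * π)⁻¹ * ∫ t in (-π)..π, Complex.exp (-(m * t * Complex.I)) * ⟪v, u t⟫_ℂ := by
  have hexp : ∀ t : ℝ,
      fourier (-m) (t : AddCircle (π - -π)) = Complex.exp (-(m * t * Complex.I)) := by
    intro t
    rw [fourier_coe_apply]
    congr 1
    push_cast
    field_simp
    ring
  rw [fourierCoeffOn_eq_integral, ← Complex.coe_smul, inner_smul_right]
  rw [← innerSL_apply_apply ℂ, ← (innerSL ℂ v).intervalIntegral_comp_comm]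
  · congr 1
    · push_cast; ring
    · refine integral_congr fun t _ => ?_
      rw [innerSL_apply_apply, inner_smul_right, hexp]
  · exact ((map_continuous _).comp (by fun_prop)).smul hu |>.intervalIntegrable _ _

theorem sum_inner_fourierCoeffOn_neg_pi_pi {u : ℝ → E} (hu : Continuous u) {ι : Type*}
    (s : Finset ι) (n : ι → ℤ) (v : ι → E) :
    ∑ i ∈ s, ⟪v i, fourierCoeffOn (neg_lt_self pi_pos) u (n i)⟫_ℂ =
      (2 * π)⁻¹ * ∫ t in (-π)..π, ⟪∑ i ∈ s, Complex.exp (n i * t * Complex.I) • v i, u t⟫_ℂ := by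
  have hconj : ∀ (m : ℤ) (t : ℝ),
      starRingEnd ℂ (Complex.exp (m * t * Complex.I)) = Complex.exp (-(m * t * Complex.I)) := by
    intro m t
    rw [← Complex.exp_conj]
    simp
  simp_rw [inner_fourierCoeffOn_neg_pi_pi hu, ← mul_sum, sum_inner, inner_smul_left, hconj]
  rw [integral_finsetSum fun i _ => Continuous.intervalIntegrable (by fun_prop) _ _]

theorem sum_sum_inner_rankOneToeplitz {u : ℝ → E} (hu : Continuous u) (x : E)
    (F G : Finset ℕ) (p q : ℕ → E) :
    ∑ k ∈ G, ∑ j ∈ F, ⟪rankOneToeplitz u x k j (p j), q k⟫_ℂ =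
      (2 * π)⁻¹ * ∫ t in (-π)..π, ⟪∑ j ∈ F, Complex.exp (j * t * Complex.I) • p j, u t⟫_ℂ *
        ⟪x, ∑ k ∈ G, Complex.exp (k * t * Complex.I) • q k⟫_ℂ := by
  have hentry : ∀ k j : ℕ, ⟪rankOneToeplitz u x k j (p j), q k⟫_ℂ =
      ⟪starRingEnd ℂ ⟪x, q k⟫_ℂ • p j, fourierCoeffOn (neg_lt_self pi_pos) u ((j : ℤ) - k)⟫_ℂ := by
    intro k j
    rw [inner_rankOneToeplitz_apply, inner_smul_left, Complex.conj_conj, mul_comm]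
  simp_rw [hentry, ← sum_product' (f := fun k j => ⟪starRingEnd ℂ ⟪x, q k⟫_ℂ • p j,
    fourierCoeffOn (neg_lt_self pi_pos) u ((j : ℤ) - k)⟫_ℂ)]
  rw [sum_inner_fourierCoeffOn_neg_pi_pi hu (G ×ˢ F) (fun kj => (kj.2 : ℤ) - kj.1)]
  congr 1
  refine integral_congr fun t _ => ?_
  simp only [sum_inner, inner_sum, sum_mul_sum, sum_product, inner_smul_left,
    inner_smul_right, Complex.conj_conj]
  rw [sum_comm]
  refine sum_congr rfl fun j _ => sum_congr rfl fun k _ => ?_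
  have hexp : starRingEnd ℂ (Complex.exp (((j : ℤ) - k : ℤ) * t * Complex.I)) =
      starRingEnd ℂ (Complex.exp (j * t * Complex.I)) * Complex.exp (k * t * Complex.I) := by
    simp only [← Complex.exp_conj, ← Complex.exp_add, map_mul, Complex.conj_I, Complex.conj_ofReal,
      map_natCast, map_intCast]
    congr 1
    push_cast
    ring
  rw [hexp]
  ring

theorem schurBoundedBy_rankOneToeplitz {u : ℝ → E} (hu : Continuous u)
    (hu1 : ∀ t, ‖u t‖ ≤ 1) (x : E) : SchurBoundedBy (rankOneToeplitz u x) ‖x‖ := by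
  intro F G p q
  set SF : ℝ → E := fun t => ∑ j ∈ F, Complex.exp (j * t * Complex.I) • p j
  set SG : ℝ → E := fun t => ∑ k ∈ G, Complex.exp (k * t * Complex.I) • q k
  have hSF : Continuous SF := by fun_prop
  have hSG : Continuous SG := by fun_prop
  have hpt : ∀ t, ‖⟪SF t, u t⟫_ℂ * ⟪x, SG t⟫_ℂ‖ ≤ ‖x‖ * (‖SF t‖ * ‖SG t‖) := fun t =>
    calc ‖⟪SF t, u t⟫_ℂ * ⟪x, SG t⟫_ℂ‖ ≤ ‖SF t‖ * ‖u t‖ * (‖x‖ * ‖SG t‖) := by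
          rw [norm_mul]; gcongr <;> exact norm_inner_le_norm _ _
      _ ≤ ‖SF t‖ * 1 * (‖x‖ * ‖SG t‖) := by gcongr; exact hu1 t
      _ = ‖x‖ * (‖SF t‖ * ‖SG t‖) := by ring
  have hparseval : ∀ v : ℕ → E, ∀ s : Finset ℕ, ∫ t in (-π)..π,
      ‖∑ j ∈ s, Complex.exp (j * t * Complex.I) • v j‖ ^ 2 = 2 * π * ∑ j ∈ s, ‖v j‖ ^ 2 :=
    fun v s => by simpa using integral_norm_sum_exp_smul_sq s Nat.cast_injective v
  have h2π : (0 : ℝ) < 2 * π := by positivity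
  rw [sum_sum_inner_rankOneToeplitz hu, norm_mul, Complex.norm_real, norm_inv,
    Real.norm_of_nonneg h2π.le]
  calc (2 * π)⁻¹ * ‖∫ t in (-π)..π, ⟪SF t, u t⟫_ℂ * ⟪x, SG t⟫_ℂ‖
      ≤ (2 * π)⁻¹ * ∫ t in (-π)..π, ‖x‖ * (‖SF t‖ * ‖SG t‖) := by
        gcongr
        exact norm_integral_le_of_norm_le (by linarith) (.of_forall fun t _ => hpt t)
          (Continuous.intervalIntegrable (by fun_prop) _ _)
    _ ≤ ‖x‖ * ((2 * π)⁻¹ * (√(∫ t in (-π)..π, ‖SF t‖ ^ 2) * √(∫ t in (-π)..π, ‖SG t‖ ^ 2))) := by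
        rw [integral_const_mul, mul_left_comm]
        gcongr
        exact integral_mul_le_sqrt_integral_sq_mul_sqrt (by linarith) hSF.norm hSG.norm
          (fun _ => norm_nonneg _) (fun _ => norm_nonneg _)
    _ = ‖x‖ * √(∑ j ∈ F, ‖p j‖ ^ 2) * √(∑ k ∈ G, ‖q k‖ ^ 2) := by
        rw [hparseval, hparseval, sqrt_mul h2π.le, sqrt_mul h2π.le]
        field_simp
        rw [sq_sqrt h2π.le]
        ring

theorem MrBoundedBy.norm_sum_inner_fourierCoeffOn_le {T : ℤ → E →L[ℂ] E} {C : ℝ}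
    (hT : MrBoundedBy (fun k j => T ((j : ℤ) - k)) C) {S : Finset ℤ}
    (hS : Function.support T ⊆ S) {u : ℝ → E} (hu : Continuous u) (hu1 : ∀ t, ‖u t‖ ≤ 1)
    {x : E} (hx : ‖x‖ = 1) :
    ‖∑ m ∈ S, ⟪T m x, fourierCoeffOn (neg_lt_self pi_pos) u m⟫_ℂ‖ ≤ C := by
  refine norm_sum_le_of_norm_sum_range_sum_range_le
    (fun m hm => hS fun hT0 => hm (by simp [hT0])) fun n => ?_
  have hB := schurBoundedBy_rankOneToeplitz hu hu1 x
  rw [hx] at hB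
  have h := hT _ 1 zero_le_one hB (range n) (range n) (fun _ => x) (fun _ => x)
  rw [mul_assoc, Real.mul_self_sqrt (by positivity)] at h
  simpa [schur, inner_rankOneToeplitz_apply, hx] using h

end InnerProduct

open Real in
/-- For a `B(H)`-valued trigonometric polynomial `P(t) = ∑_l T_l e^{ilt}`, the `SOT-L¹`
norm `sup_{‖x‖=1} (1/2π)∫₀^{2π}‖∑_l T_l(x)e^{ilt}‖dt` is dominated by the right Schur
multiplier norm of the Toeplitz matrix `A_P = (T_{j−k})`. -/
theorem sotL1_le_mrNorm (T : ℤ → (H →L[ℂ] H)) (hfin : (Function.support T).Finite) :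
    ∀ C : ℝ, 0 ≤ C →
      MrBoundedBy (fun k j => T ((j : ℤ) - (k : ℤ))) C →
      ∀ x : H, ‖x‖ = 1 →
        (2 * π)⁻¹ * ∫ t in (-π)..π, ‖∑ᶠ l : ℤ, Complex.exp ((l : ℂ) * t * Complex.I) • T l x‖
          ≤ C := by
  intro C _ hT x hx
  set S := hfin.toFinset
  have hS : Function.support T ⊆ S := by simp [S]
  set f : ℝ → H := fun t => ∑ m ∈ S, Complex.exp (m * t * Complex.I) • T m x
  have hf : Continuous f := by fun_prop
  have hfsum : ∀ t : ℝ, ∑ᶠ l : ℤ, Complex.exp (l * t * Complex.I) • T l x = f t := fun t =>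
    finsum_eq_sum_of_support_subset _ fun l hl => hS fun hT0 => hl (by simp [hT0])
  simp_rw [hfsum]
  refine le_of_forall_pos_le_add fun δ hδ => ?_
  obtain ⟨u, hu, hu1, hfu⟩ := exists_continuous_norm_le_one_re_inner_ge hf hδ
  have hint := integral_norm_le_re_integral_inner_add (neg_le_self pi_pos.le) hf hu hfu
  have hsum : ∑ m ∈ S, ⟪T m x, fourierCoeffOn (neg_lt_self pi_pos) u m⟫_ℂ =
      ((2 * π)⁻¹ : ℝ) * ∫ t in (-π)..π, ⟪f t, u t⟫_ℂ :=
    sum_inner_fourierCoeffOn_neg_pi_pi hu S (fun m => m) (fun m => T m x)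
  have hC := hT.norm_sum_inner_fourierCoeffOn_le hS hu hu1 hx
  calc (2 * π)⁻¹ * ∫ t in (-π)..π, ‖f t‖
      ≤ (2 * π)⁻¹ * ((∫ t in (-π)..π, ⟪f t, u t⟫_ℂ).re + 2 * π * δ) := by
        gcongr; linarith
    _ = (∑ m ∈ S, ⟪T m x, fourierCoeffOn (neg_lt_self pi_pos) u m⟫_ℂ).re + δ := by
        rw [hsum, Complex.re_ofReal_mul]
        field_simp
    _ ≤ C + δ := by gcongr; exact (Complex.re_le_norm _).trans hC
end
end
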